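/- arXiv:math/0407259 — 2 statements merged into one kernel-verified Lean document; each statement's English description precedes it below -/
import Mathlib

section
/- For the Hesse cubic f = x₁³ + x₂³ + x₃³ + 6λ·x₁x₂x₃ with λ ∈ ℝ, one has for all i, j ∈ {1,2,3} the polynomial identity (1/2)·Σ_{p,q=1}^{3} B_{pq} · ∂²B_{ij}/∂x_p∂x_q = 6⁴·λ(λ³ − 1)·x_i·x_j in ℝ[x₁,x₂,x₃]. -/
open MvPolynomial

noncomputable section

/-- The Hessian matrix of second partial derivatives of `f`. -/
def hessian (f : MvPolynomial (Fin 3) ℝ) : Matrix (Fin 3) (Fin 3) (MvPolynomial (Fin 3) ℝ) :=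
  fun i j => pderiv i (pderiv j f)

/-- The adjugate (cofactor) matrix of the Hessian matrix of `f`. -/
def Bmat (f : MvPolynomial (Fin 3) ℝ) : Matrix (Fin 3) (Fin 3) (MvPolynomial (Fin 3) ℝ) :=
  (hessian f).adjugate

/-- The Hesse cubic `x₁³ + x₂³ + x₃³ + 6λ x₁x₂x₃`. -/
def hesseCubic (lam : ℝ) : MvPolynomial (Fin 3) ℝ :=
  X 0 ^ 3 + X 1 ^ 3 + X 2 ^ 3 + C (6 * lam) * (X 0 * X 1 * X 2)

section aux

lemma pd_two (i : Fin 3) : pderiv i (2 : MvPolynomial (Fin 3) ℝ) = 0 := by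
  rw [show (2 : MvPolynomial (Fin 3) ℝ) = C 2 from (map_ofNat C 2).symm, pderiv_C]

lemma pd_three (i : Fin 3) : pderiv i (3 : MvPolynomial (Fin 3) ℝ) = 0 := by
  rw [show (3 : MvPolynomial (Fin 3) ℝ) = C 3 from (map_ofNat C 3).symm, pderiv_C]

lemma pd_six (i : Fin 3) : pderiv i (6 : MvPolynomial (Fin 3) ℝ) = 0 := by
  rw [show (6 : MvPolynomial (Fin 3) ℝ) = C 6 from (map_ofNat C 6).symm, pderiv_C]

lemma pdX00 : pderiv (0:Fin 3) (X 0 : MvPolynomial (Fin 3) ℝ) = 1 := pderiv_X_self 0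
lemma pdX11 : pderiv (1:Fin 3) (X 1 : MvPolynomial (Fin 3) ℝ) = 1 := pderiv_X_self 1
lemma pdX22 : pderiv (2:Fin 3) (X 2 : MvPolynomial (Fin 3) ℝ) = 1 := pderiv_X_self 2
lemma pdX01 : pderiv (0:Fin 3) (X 1 : MvPolynomial (Fin 3) ℝ) = 0 := pderiv_X_of_ne (by decide)
lemma pdX02 : pderiv (0:Fin 3) (X 2 : MvPolynomial (Fin 3) ℝ) = 0 := pderiv_X_of_ne (by decide)
lemma pdX10 : pderiv (1:Fin 3) (X 0 : MvPolynomial (Fin 3) ℝ) = 0 := pderiv_X_of_ne (by decide)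
lemma pdX12 : pderiv (1:Fin 3) (X 2 : MvPolynomial (Fin 3) ℝ) = 0 := pderiv_X_of_ne (by decide)
lemma pdX20 : pderiv (2:Fin 3) (X 0 : MvPolynomial (Fin 3) ℝ) = 0 := pderiv_X_of_ne (by decide)
lemma pdX21 : pderiv (2:Fin 3) (X 1 : MvPolynomial (Fin 3) ℝ) = 0 := pderiv_X_of_ne (by decide)

end aux

lemma hessian_eq (lam : ℝ) : hessian (hesseCubic lam) =
    !![C 6 * X 0, C (6*lam) * X 2, C (6*lam) * X 1;
       C (6*lam) * X 2, C 6 * X 1, C (6*lam) * X 0;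
       C (6*lam) * X 1, C (6*lam) * X 0, C 6 * X 2] := by
  funext i j
  fin_cases i <;> fin_cases j <;>
    · simp only [Fin.zero_eta, Fin.mk_one, Fin.reduceFinMk, hessian, hesseCubic, map_add,
        Matrix.cons_val', Matrix.cons_val_zero, Matrix.cons_val_one, Matrix.cons_val_two, Matrix.tail_cons, Matrix.head_cons,
        Matrix.empty_val', Matrix.cons_val_fin_one, Matrix.head_fin_const, Matrix.of_apply, pderiv_mul, pderiv_pow, pderiv_C,
        Nat.cast_ofNat, pd_two, pd_three, pd_six,
        pdX00, pdX11, pdX22, pdX01, pdX02, pdX10, pdX12, pdX20, pdX21,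
        mul_zero, zero_mul, mul_one, one_mul, add_zero, zero_add, map_ofNat]
      try ring

lemma Bmat_eq (lam : ℝ) : Bmat (hesseCubic lam) =
    !![C 36 * (X 1 * X 2) - C (36*lam^2) * X 0 ^ 2,
       C (36*lam^2) * (X 0 * X 1) - C (36*lam) * X 2 ^ 2,
       C (36*lam^2) * (X 0 * X 2) - C (36*lam) * X 1 ^ 2;
       C (36*lam^2) * (X 0 * X 1) - C (36*lam) * X 2 ^ 2,
       C 36 * (X 0 * X 2) - C (36*lam^2) * X 1 ^ 2,
       C (36*lam^2) * (X 1 * X 2) - C (36*lam) * X 0 ^ 2;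
       C (36*lam^2) * (X 0 * X 2) - C (36*lam) * X 1 ^ 2,
       C (36*lam^2) * (X 1 * X 2) - C (36*lam) * X 0 ^ 2,
       C 36 * (X 0 * X 1) - C (36*lam^2) * X 2 ^ 2] := by
  rw [Bmat, hessian_eq, Matrix.adjugate_fin_three_of]
  funext i j
  fin_cases i <;> fin_cases j <;>
    · simp only [Fin.zero_eta, Fin.mk_one, Fin.reduceFinMk, Matrix.cons_val', Matrix.cons_val_zero, Matrix.cons_val_one, Matrix.cons_val_two, Matrix.tail_cons, Matrix.head_cons,
        Matrix.empty_val', Matrix.cons_val_fin_one, Matrix.head_fin_const, Matrix.of_apply,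
        map_mul, map_pow, map_ofNat]
      try ring

lemma B00 (lam : ℝ) : Bmat (hesseCubic lam) 0 0 =
    C 36 * (X 1 * X 2) - C (36*lam^2) * X 0 ^ 2 := by rw [Bmat_eq]; rfl
lemma B01 (lam : ℝ) : Bmat (hesseCubic lam) 0 1 =
    C (36*lam^2) * (X 0 * X 1) - C (36*lam) * X 2 ^ 2 := by rw [Bmat_eq]; rfl
lemma B02 (lam : ℝ) : Bmat (hesseCubic lam) 0 2 =
    C (36*lam^2) * (X 0 * X 2) - C (36*lam) * X 1 ^ 2 := by rw [Bmat_eq]; rfl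
lemma B10 (lam : ℝ) : Bmat (hesseCubic lam) 1 0 =
    C (36*lam^2) * (X 0 * X 1) - C (36*lam) * X 2 ^ 2 := by rw [Bmat_eq]; rfl
lemma B11 (lam : ℝ) : Bmat (hesseCubic lam) 1 1 =
    C 36 * (X 0 * X 2) - C (36*lam^2) * X 1 ^ 2 := by rw [Bmat_eq]; rfl
lemma B12 (lam : ℝ) : Bmat (hesseCubic lam) 1 2 =
    C (36*lam^2) * (X 1 * X 2) - C (36*lam) * X 0 ^ 2 := by rw [Bmat_eq]; rfl
lemma B20 (lam : ℝ) : Bmat (hesseCubic lam) 2 0 =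
    C (36*lam^2) * (X 0 * X 2) - C (36*lam) * X 1 ^ 2 := by rw [Bmat_eq]; rfl
lemma B21 (lam : ℝ) : Bmat (hesseCubic lam) 2 1 =
    C (36*lam^2) * (X 1 * X 2) - C (36*lam) * X 0 ^ 2 := by rw [Bmat_eq]; rfl
lemma B22 (lam : ℝ) : Bmat (hesseCubic lam) 2 2 =
    C 36 * (X 0 * X 1) - C (36*lam^2) * X 2 ^ 2 := by rw [Bmat_eq]; rfl

/-- For the Hesse cubic, `(1/2) ∑_{p,q} B_{pq} ∂²B_{ij}/∂x_p∂x_q = 6⁴ λ(λ³-1) x_i x_j`. -/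
theorem stmt1 (lam : ℝ) (i j : Fin 3) :
    C (1/2 : ℝ) * ∑ p : Fin 3, ∑ q : Fin 3,
        Bmat (hesseCubic lam) p q * pderiv p (pderiv q (Bmat (hesseCubic lam) i j)) =
      C (6 ^ 4 * (lam * (lam ^ 3 - 1))) * X i * X j := by
  have h2 : (C (2:ℝ) : MvPolynomial (Fin 3) ℝ) ≠ 0 := fun h => by
    have := C_injective (Fin 3) ℝ (h.trans (map_zero C).symm); norm_num at this
  apply mul_left_cancel₀ h2
  rw [← mul_assoc, ← map_mul, show (2:ℝ) * (1/2) = 1 by norm_num, map_one, one_mul]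
  fin_cases i <;> fin_cases j <;>
    · simp only [Fin.zero_eta, Fin.mk_one, Fin.reduceFinMk, Fin.sum_univ_three,
        B00, B01, B02, B10, B11, B12, B20, B21, B22,
        map_sub, map_add, map_zero, pderiv_one, pderiv_mul, pderiv_pow, pderiv_C, Nat.cast_ofNat,
        pd_two, pd_three, pd_six,
        pdX00, pdX11, pdX22, pdX01, pdX02, pdX10, pdX12, pdX20, pdX21,
        mul_zero, zero_mul, mul_one, one_mul, add_zero, zero_add, sub_zero, zero_sub]
      simp only [map_mul, map_pow, map_ofNat, map_one, map_sub]
      ring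
end
end

section
/- For all natural numbers u, v, w: Σ_{k=0}^{2u+1} C(2u+1, k)·( C(2v, v+u−k−1)·C(2w, w+u−k−1) − C(2v, v+u−k)·C(2w, w+u−k) ) ≤ 0, where the inner indices v+u−k−1, w+u−k−1, v+u−k, w+u−k are interpreted as integers. -/
/-- The binomial coefficient `C(n, m)` with integer lower index, with the convention that
`C(n, m) = 0` whenever `m < 0` or `m > n`. -/
def C (n : ℕ) (m : ℤ) : ℤ :=
  if 0 ≤ m then (n.choose m.toNat : ℤ) else 0

lemma C_nonneg (n : ℕ) (m : ℤ) : 0 ≤ C n m := by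
  unfold C; split <;> positivity

lemma C_neg (n : ℕ) {m : ℤ} (h : m < 0) : C n m = 0 := by
  unfold C; rw [if_neg (by omega)]

lemma C_big (n : ℕ) {m : ℤ} (h : (n : ℤ) < m) : C n m = 0 := by
  unfold C
  split
  · rw [Nat.choose_eq_zero_of_lt (by omega)]; simp
  · rfl

lemma C_symm (n : ℕ) (m : ℤ) : C n ((n : ℤ) - m) = C n m := by
  rcases lt_or_ge m 0 with h | h
  · rw [C_neg n h, C_big n (by omega)]
  rcases le_or_gt m (n : ℤ) with h2 | h2
  · unfold C
    rw [if_pos (by omega), if_pos h]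
    congr 1
    have e : ((n : ℤ) - m).toNat = n - m.toNat := by omega
    rw [e, Nat.choose_symm (by omega)]
  · rw [C_big n h2, C_neg n (by omega)]

lemma choose_succ_ge (n k : ℕ) (h : 2 * k + 1 ≤ n) : n.choose k ≤ n.choose (k + 1) := by
  rcases lt_or_ge k (n / 2) with h1 | h1
  · exact Nat.choose_le_succ_of_lt_half_left h1
  · have h2 : 2 * k + 1 = n := by omega
    have h3 : n.choose (k + 1) = n.choose k := by
      rw [← Nat.choose_symm (n := n) (k := k + 1) (by omega)]
      congr 1; omega
    omega

lemma C_incr (n : ℕ) (m : ℤ) (h : 2 * m + 1 ≤ (n : ℤ)) : C n m ≤ C n (m + 1) := by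
  rcases lt_or_ge m 0 with h1 | h1
  · rw [C_neg n h1]; exact C_nonneg n (m + 1)
  · unfold C
    rw [if_pos h1, if_pos (by omega)]
    have e : (m + 1).toNat = m.toNat + 1 := by omega
    rw [e]
    exact_mod_cast choose_succ_ge n m.toNat (by omega)

lemma C_decr (n : ℕ) (m : ℤ) (h : (n : ℤ) ≤ 2 * m) : C n (m + 1) ≤ C n m := by
  have h1 := C_incr n ((n : ℤ) - m - 1) (by omega)
  rw [show (n : ℤ) - m - 1 + 1 = (n : ℤ) - m by ring] at h1
  calc C n (m + 1) = C n ((n : ℤ) - (m + 1)) := (C_symm n (m + 1)).symm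
    _ ≤ C n ((n : ℤ) - m) := by
        rw [show (n : ℤ) - (m + 1) = (n : ℤ) - m - 1 by ring]; exact h1
    _ = C n m := C_symm n m

def F (v w : ℕ) (j : ℤ) : ℤ := C (2 * v) ((v : ℤ) + j) * C (2 * w) ((w : ℤ) + j)

lemma F_symm (v w : ℕ) (j : ℤ) : F v w (-j) = F v w j := by
  unfold F
  rw [show (v : ℤ) + -j = (2 * v : ℕ) - ((v : ℤ) + j) by push_cast; ring, C_symm,
      show (w : ℤ) + -j = (2 * w : ℕ) - ((w : ℤ) + j) by push_cast; ring, C_symm]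

lemma F_decr (v w : ℕ) (j : ℤ) (h : 0 ≤ j) : F v w (j + 1) ≤ F v w j := by
  unfold F
  have h1 : C (2 * v) ((v : ℤ) + (j + 1)) ≤ C (2 * v) ((v : ℤ) + j) := by
    rw [show (v : ℤ) + (j + 1) = ((v : ℤ) + j) + 1 by ring]
    exact C_decr _ _ (by push_cast; omega)
  have h2 : C (2 * w) ((w : ℤ) + (j + 1)) ≤ C (2 * w) ((w : ℤ) + j) := by
    rw [show (w : ℤ) + (j + 1) = ((w : ℤ) + j) + 1 by ring]
    exact C_decr _ _ (by push_cast; omega)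
  exact mul_le_mul h1 h2 (C_nonneg _ _) (C_nonneg _ _)

lemma F_decr2 (v w : ℕ) (j : ℤ) (h : 0 ≤ j) : F v w (j + 2) ≤ F v w j := by
  calc F v w (j + 2) = F v w ((j + 1) + 1) := by ring_nf
    _ ≤ F v w (j + 1) := F_decr v w (j + 1) (by omega)
    _ ≤ F v w j := F_decr v w j h

/-- `∑_{k=0}^{2u+1} C(2u+1,k) (C(2v, v+u-k-1) C(2w, w+u-k-1) - C(2v, v+u-k) C(2w, w+u-k)) ≤ 0`. -/
theorem stmt10 (u v w : ℕ) :
    ∑ k ∈ Finset.range (2 * u + 2),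
        C (2 * u + 1) (k : ℤ) *
          (C (2 * v) ((v : ℤ) + u - k - 1) * C (2 * w) ((w : ℤ) + u - k - 1) -
            C (2 * v) ((v : ℤ) + u - k) * C (2 * w) ((w : ℤ) + u - k)) ≤ 0 := by
  set n := 2 * u + 1 with hn
  have hS : ∑ k ∈ Finset.range (2 * u + 2),
        C (2 * u + 1) (k : ℤ) *
          (C (2 * v) ((v : ℤ) + u - k - 1) * C (2 * w) ((w : ℤ) + u - k - 1) -
            C (2 * v) ((v : ℤ) + u - k) * C (2 * w) ((w : ℤ) + u - k))
      = ∑ k ∈ Finset.range (2 * u + 2),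
          C n (k : ℤ) * (F v w ((u : ℤ) - k - 1) - F v w ((u : ℤ) - k)) := by
    apply Finset.sum_congr rfl
    intro k _
    unfold F
    congr 2 <;> · congr 2 <;> ring
  rw [hS]
  -- Abel step 1
  have h1 : ∑ k ∈ Finset.range (2 * u + 2), C n (k : ℤ) * F v w ((u : ℤ) - k - 1)
      = ∑ k ∈ Finset.range (2 * u + 3), C n ((k : ℤ) - 1) * F v w ((u : ℤ) - k) := by
    rw [Finset.sum_range_succ' (fun k => C n ((k : ℤ) - 1) * F v w ((u : ℤ) - k)) (2 * u + 2)]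
    have h0 : C n ((0 : ℤ) - 1) = 0 := C_neg n (by omega)
    simp only [Nat.cast_zero, h0, zero_mul, add_zero]
    apply Finset.sum_congr rfl
    intro k _
    congr 2 <;> push_cast <;> ring
  have h2 : ∑ k ∈ Finset.range (2 * u + 2), C n (k : ℤ) * F v w ((u : ℤ) - k)
      = ∑ k ∈ Finset.range (2 * u + 3), C n (k : ℤ) * F v w ((u : ℤ) - k) := by
    rw [Finset.sum_range_succ (fun k => C n (k : ℤ) * F v w ((u : ℤ) - k)) (2 * u + 2)]
    have h0 : C n ((2 * u + 2 : ℕ) : ℤ) = 0 := C_big n (by push_cast; omega)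
    rw [h0, zero_mul, add_zero]
  have hAbel : ∑ k ∈ Finset.range (2 * u + 2),
        C n (k : ℤ) * (F v w ((u : ℤ) - k - 1) - F v w ((u : ℤ) - k))
      = ∑ k ∈ Finset.range (2 * u + 3),
          (C n ((k : ℤ) - 1) - C n (k : ℤ)) * F v w ((u : ℤ) - k) := by
    simp only [mul_sub, sub_mul, Finset.sum_sub_distrib]
    rw [h1, h2]
  rw [hAbel]
  -- Reflection
  have hRefl : ∑ k ∈ Finset.range (2 * u + 3),
        (C n ((k : ℤ) - 1) - C n (k : ℤ)) * F v w ((u : ℤ) - k)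
      = ∑ k ∈ Finset.range (2 * u + 3),
          (C n (k : ℤ) - C n ((k : ℤ) - 1)) * F v w ((u : ℤ) + 2 - k) := by
    rw [← Finset.sum_range_reflect
      (fun k => (C n ((k : ℤ) - 1) - C n (k : ℤ)) * F v w ((u : ℤ) - k)) (2 * u + 3)]
    apply Finset.sum_congr rfl
    intro k hk
    simp only [Finset.mem_range] at hk
    have hc : ((2 * u + 3 - 1 - k : ℕ) : ℤ) = 2 * (u : ℤ) + 2 - k := by omega
    rw [hc]
    have e1 : C n (2 * (u : ℤ) + 2 - k - 1) = C n (k : ℤ) := by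
      rw [show 2 * (u : ℤ) + 2 - k - 1 = (n : ℤ) - k by push_cast [hn]; ring, C_symm]
    have e2 : C n (2 * (u : ℤ) + 2 - k) = C n ((k : ℤ) - 1) := by
      rw [show 2 * (u : ℤ) + 2 - k = (n : ℤ) - ((k : ℤ) - 1) by push_cast [hn]; ring, C_symm]
    have e3 : F v w ((u : ℤ) - (2 * (u : ℤ) + 2 - k)) = F v w ((u : ℤ) + 2 - k) := by
      rw [show (u : ℤ) - (2 * (u : ℤ) + 2 - k) = -((u : ℤ) + 2 - k) by ring, F_symm]
    rw [e1, e2, e3]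
  -- each term of the doubled sum is nonpositive
  have hterm : ∀ k ∈ Finset.range (2 * u + 3),
      (C n ((k : ℤ) - 1) - C n (k : ℤ)) * (F v w ((u : ℤ) - k) - F v w ((u : ℤ) + 2 - k)) ≤ 0 := by
    intro k hk
    simp only [Finset.mem_range] at hk
    rcases lt_trichotomy k (u + 1) with hku | hku | hku
    · -- k ≤ u
      have hd : C n ((k : ℤ) - 1) ≤ C n (k : ℤ) := by
        have := C_incr n ((k : ℤ) - 1) (by push_cast [hn]; omega)
        rwa [show (k : ℤ) - 1 + 1 = (k : ℤ) by ring] at this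
      have hf : F v w ((u : ℤ) + 2 - k) ≤ F v w ((u : ℤ) - k) := by
        have := F_decr2 v w ((u : ℤ) - k) (by omega)
        rwa [show (u : ℤ) - k + 2 = (u : ℤ) + 2 - k by ring] at this
      nlinarith [hd, hf]
    · -- k = u + 1
      subst hku
      have : F v w ((u : ℤ) - (u + 1 : ℕ)) = F v w ((u : ℤ) + 2 - (u + 1 : ℕ)) := by
        rw [show (u : ℤ) - (u + 1 : ℕ) = -(1 : ℤ) by push_cast; ring,
            show (u : ℤ) + 2 - (u + 1 : ℕ) = (1 : ℤ) by push_cast; ring]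
        exact F_symm v w 1
      rw [this]
      simp
    · -- k ≥ u + 2
      have hd : C n (k : ℤ) ≤ C n ((k : ℤ) - 1) := by
        have := C_decr n ((k : ℤ) - 1) (by push_cast [hn]; omega)
        rwa [show (k : ℤ) - 1 + 1 = (k : ℤ) by ring] at this
      have hf : F v w ((u : ℤ) - k) ≤ F v w ((u : ℤ) + 2 - k) := by
        have e1 : F v w ((u : ℤ) - k) = F v w ((k : ℤ) - u) := by
          rw [show (u : ℤ) - k = -((k : ℤ) - u) by ring, F_symm]
        have e2 : F v w ((u : ℤ) + 2 - k) = F v w ((k : ℤ) - u - 2) := by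
          rw [show (u : ℤ) + 2 - k = -((k : ℤ) - u - 2) by ring, F_symm]
        rw [e1, e2]
        have := F_decr2 v w ((k : ℤ) - u - 2) (by omega)
        rwa [show (k : ℤ) - u - 2 + 2 = (k : ℤ) - u by ring] at this
      nlinarith [hd, hf]
  have hsum : ∑ k ∈ Finset.range (2 * u + 3),
      (C n ((k : ℤ) - 1) - C n (k : ℤ)) * (F v w ((u : ℤ) - k) - F v w ((u : ℤ) + 2 - k)) ≤ 0 :=
    Finset.sum_nonpos hterm
  have hexpand : ∑ k ∈ Finset.range (2 * u + 3),
      (C n ((k : ℤ) - 1) - C n (k : ℤ)) * (F v w ((u : ℤ) - k) - F v w ((u : ℤ) + 2 - k))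
      = ∑ k ∈ Finset.range (2 * u + 3),
          (C n ((k : ℤ) - 1) - C n (k : ℤ)) * F v w ((u : ℤ) - k)
        + ∑ k ∈ Finset.range (2 * u + 3),
            (C n (k : ℤ) - C n ((k : ℤ) - 1)) * F v w ((u : ℤ) + 2 - k) := by
    rw [← Finset.sum_add_distrib]
    apply Finset.sum_congr rfl
    intro k _
    ring
  rw [hexpand, ← hRefl] at hsum
  linarith
end
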